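/- Suppose β* : Fin n → Bool is the unique minimizer of P_N(ρ, ·), with gap δ > 0, i.e., P_N(ρ, β) ≥ P_N(ρ, β*) + δ for every β ≠ β*. If ε ≥ 0, ξ ≥ 0, P_max ≥ 0 and ε * ξ * P_max * n < δ, then β* is also a minimizer of the erroneous cost P_N(fun k => ρ k + ε, ·); i.e., sufficiently small estimation errors cannot change the optimal switching policy. -/

import Mathlib

/-!
Raising every load by `ε` adds `ξ * ε * P_max` for each active SBS, i.e. a nonnegative amount that is
at most `n * ξ * ε * P_max < δ`. A perturbation that is nonnegative and smaller than the gap at the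
minimizer cannot let any competitor overtake it.
-/

open Finset

/-- Network power consumption: `P_N(ρ, β) = P_H + ∑ k, (if β k then P_C + ξ * ρ k * P_max else P_S)`. -/
noncomputable def PN {n : ℕ} (P_H P_C P_S ξ P_max : ℝ) (ρ : Fin n → ℝ) (β : Fin n → Bool) : ℝ :=
  P_H + ∑ k, (if β k then P_C + ξ * ρ k * P_max else P_S)

theorem le_apply_of_gap_of_perturbation_le {α : Type*} {f g : α → ℝ} {a : α} {c δ : ℝ}
    (hgap : ∀ x, x ≠ a → f a + δ ≤ f x) (hcδ : c ≤ δ) (hfg : ∀ x, f x ≤ g x)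
    (hga : g a ≤ f a + c) (x : α) : g a ≤ g x := by
  obtain rfl | hx := eq_or_ne x a
  · exact le_rfl
  · linarith [hgap x hx, hfg x]

theorem PN_add_const_load {n : ℕ} (P_H P_C P_S ξ P_max : ℝ) (ρ : Fin n → ℝ) (ε : ℝ)
    (β : Fin n → Bool) :
    PN P_H P_C P_S ξ P_max (fun k => ρ k + ε) β
      = PN P_H P_C P_S ξ P_max ρ β + #{k | β k} * (ξ * ε * P_max) := by
  have hsplit : ∀ k, (if β k then P_C + ξ * (ρ k + ε) * P_max else P_S)
      = (if β k then P_C + ξ * ρ k * P_max else P_S) + if β k then ξ * ε * P_max else 0 := by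
    intro k
    split <;> ring
  simp only [PN, hsplit, sum_add_distrib, sum_ite, sum_const_zero, sum_const, nsmul_eq_mul,
    add_zero, add_assoc]

theorem small_error_preserves_minimizer_general {n : ℕ} (P_H P_C P_S ξ P_max : ℝ)
    (ρ : Fin n → ℝ) (βstar : Fin n → Bool) (δ ε : ℝ)
    (hgap : ∀ β : Fin n → Bool, β ≠ βstar →
      PN P_H P_C P_S ξ P_max ρ β ≥ PN P_H P_C P_S ξ P_max ρ βstar + δ)
    (hε : 0 ≤ ε) (hξ : 0 ≤ ξ) (hPmax : 0 ≤ P_max)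
    (hsmall : ε * ξ * P_max * (n : ℝ) < δ) :
    ∀ β : Fin n → Bool,
      PN P_H P_C P_S ξ P_max (fun k => ρ k + ε) βstar
        ≤ PN P_H P_C P_S ξ P_max (fun k => ρ k + ε) β := by
  have hc : 0 ≤ ξ * ε * P_max := by positivity
  refine le_apply_of_gap_of_perturbation_le (c := n * (ξ * ε * P_max)) hgap (by linarith)
    (fun β => ?_) ?_
  · rw [PN_add_const_load]
    exact le_add_of_nonneg_right (by positivity)
  · rw [PN_add_const_load]
    have hcard : (#{k | βstar k} : ℝ) ≤ n := by
      exact_mod_cast (card_filter_le _ _).trans_eq (card_fin n)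
    gcongr

/-- Sufficiently small estimation errors cannot change the optimal switching policy:
if `β*` is the unique minimizer with gap `δ` and `ε * ξ * P_max * n < δ`, then `β*`
also minimizes the erroneous cost. -/
theorem small_error_preserves_minimizer {n : ℕ} (P_H P_C P_S ξ P_max : ℝ)
    (ρ : Fin n → ℝ) (βstar : Fin n → Bool) (δ ε : ℝ) (hδ : 0 < δ)
    (hgap : ∀ β : Fin n → Bool, β ≠ βstar →
      PN P_H P_C P_S ξ P_max ρ β ≥ PN P_H P_C P_S ξ P_max ρ βstar + δ)
    (hε : 0 ≤ ε) (hξ : 0 ≤ ξ) (hPmax : 0 ≤ P_max)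
    (hsmall : ε * ξ * P_max * (n : ℝ) < δ) :
    ∀ β : Fin n → Bool,
      PN P_H P_C P_S ξ P_max (fun k => ρ k + ε) βstar
        ≤ PN P_H P_C P_S ξ P_max (fun k => ρ k + ε) β :=
  small_error_preserves_minimizer_general P_H P_C P_S ξ P_max ρ βstar δ ε hgap hε hξ hPmax hsmall
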